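/- Let f be a monic polynomial of degree n ≥ 2 with complex coefficients with distinct roots λ_1,…,λ_k of multiplicities r_1,…,r_k, let z_{n-1} be the root of f^{(n-1)} and z_{n-2} a root of f^{(n-2)}. Then (z_{n-1} − z_{n-2})^2 = (1/(n^2(n−1))) · Σ_{1 ≤ j < s ≤ k} r_j r_s (λ_j − λ_s)^2. -/

import Mathlib

/-!
Write `e₁ = ∑ rⱼ λⱼ` and `p₂ = ∑ rⱼ λⱼ²`. By Vieta the three leading coefficients of `f` are
`1, -e₁, e₂` with `2 e₂ = e₁² - p₂`, and they are all that the derivatives of order `n - 1` and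
`n - 2` see: `n z_{n-1} = e₁`, while `n (n - 1) z² - 2 (n - 1) e₁ z + 2 e₂ = 0` at `z = z_{n-2}`.
Eliminating gives `n² (n - 1) (z_{n-1} - z_{n-2})² = n p₂ - e₁²`, which by the weighted Lagrange
identity is `∑_{j < s} rⱼ rₛ (λⱼ - λₛ)²`.
-/

open Polynomial
open scoped Nat

namespace Multiset

variable {R : Type*}

theorem esymm_one [CommSemiring R] (s : Multiset R) : s.esymm 1 = s.sum := by
  simp [esymm, powersetCard_one]

theorem esymm_succ_cons [CommSemiring R] (a : R) (s : Multiset R) (n : ℕ) :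
    (a ::ₘ s).esymm (n + 1) = s.esymm (n + 1) + a * s.esymm n := by
  simp [esymm, map_map, sum_map_mul_left]

theorem two_mul_esymm_two [CommRing R] (s : Multiset R) :
    2 * s.esymm 2 = s.sum ^ 2 - (s.map (· ^ 2)).sum := by
  induction s using Multiset.induction with
  | empty => simp [esymm, powersetCard_zero_right 1]
  | cons a s ih =>
    rw [esymm_succ_cons, esymm_one, sum_cons, map_cons, sum_cons]
    linear_combination ih

theorem prod_X_sub_C_coeff_card [CommRing R] (s : Multiset R) :
    (s.map fun t => X - C t).prod.coeff (card s) = 1 := by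
  simp [prod_X_sub_C_coeff, esymm]

theorem prod_X_sub_C_coeff_card_sub_one [CommRing R] {s : Multiset R} {m : ℕ}
    (hs : card s = m + 1) :
    (s.map fun t => X - C t).prod.coeff m = -s.sum := by
  rw [prod_X_sub_C_coeff s (by omega), hs, Nat.add_sub_cancel_left, esymm_one]
  ring

theorem two_mul_prod_X_sub_C_coeff_card_sub_two [CommRing R] {s : Multiset R} {m : ℕ}
    (hs : card s = m + 2) :
    2 * (s.map fun t => X - C t).prod.coeff m = s.sum ^ 2 - (s.map (· ^ 2)).sum := by
  rw [prod_X_sub_C_coeff s (by omega), hs, Nat.add_sub_cancel_left, ← two_mul_esymm_two]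
  ring

end Multiset

theorem Polynomial.eval_iterate_derivative_of_natDegree_le {R : Type*} [CommSemiring R]
    {p : R[X]} {m : ℕ} (hp : p.natDegree ≤ m + 2) (z : R) :
    (derivative^[m] p).eval z = m ! * (p.coeff m + (m + 1) * p.coeff (m + 1) * z +
      (m + 2).choose 2 * p.coeff (m + 2) * z ^ 2) := by
  have hdeg : (derivative^[m] p).natDegree < 3 :=
    (natDegree_iterate_derivative p m).trans_lt (by omega)
  rw [eval_eq_sum_range' hdeg]
  simp only [Finset.sum_range_succ, Finset.sum_range_zero, coeff_iterate_derivative,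
    Nat.descFactorial_eq_factorial_mul_choose, nsmul_eq_mul, zero_add]
  rw [add_comm 1 m, add_comm 2 m, Nat.choose_self, Nat.choose_succ_self_right,
    Nat.choose_symm_add]
  push_cast
  ring

theorem Multiset.sq_sub_of_eval_iterate_derivative_eq_zero {K : Type*} [Field K] [CharZero K]
    {s : Multiset K} {m : ℕ} (hs : Multiset.card s = m + 2) {z₁ z₂ : K}
    (h₁ : (derivative^[m + 1] (s.map fun t => X - C t).prod).eval z₁ = 0)
    (h₂ : (derivative^[m] (s.map fun t => X - C t).prod).eval z₂ = 0) :
    ((m : K) + 2) ^ 2 * ((m : K) + 1) * (z₁ - z₂) ^ 2 =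
      ((m : K) + 2) * (s.map (· ^ 2)).sum - s.sum ^ 2 := by
  set p := (s.map fun t => X - C t).prod
  have hdeg : p.natDegree = m + 2 := by rw [natDegree_multiset_prod_X_sub_C_eq_card, hs]
  have c₃ : p.coeff (m + 3) = 0 := coeff_eq_zero_of_natDegree_lt (by omega)
  have c₂ : p.coeff (m + 2) = 1 := hs ▸ s.prod_X_sub_C_coeff_card
  have c₁ : p.coeff (m + 1) = -s.sum := s.prod_X_sub_C_coeff_card_sub_one hs
  have c₀ := s.two_mul_prod_X_sub_C_coeff_card_sub_two hs
  rw [eval_iterate_derivative_of_natDegree_le (by omega)] at h₁ h₂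
  rw [c₃, c₂, c₁] at h₁
  rw [c₂, c₁, Nat.cast_choose_two] at h₂
  have hz₁ : ((m : K) + 2) * z₁ = s.sum := by
    have := (mul_eq_zero.mp h₁).resolve_left (Nat.cast_ne_zero.mpr (Nat.factorial_ne_zero _))
    push_cast at this
    linear_combination this
  have hz₂ : ((m : K) + 2) * ((m : K) + 1) * z₂ ^ 2 - 2 * ((m : K) + 1) * s.sum * z₂ +
      2 * p.coeff m = 0 := by
    have := (mul_eq_zero.mp h₂).resolve_left (Nat.cast_ne_zero.mpr (Nat.factorial_ne_zero _))
    push_cast at this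
    linear_combination 2 * this
  linear_combination ((m : K) + 2) * hz₂ - ((m : K) + 2) * c₀ +
    ((m : K) + 1) * (((m : K) + 2) * z₁ + s.sum - 2 * ((m : K) + 2) * z₂) * hz₁

namespace Finset

theorem sum_mul_sum_eq_sum_add_sum_lt {ι R : Type*} [Fintype ι] [LinearOrder ι] [CommSemiring R]
    (a b : ι → R) :
    (∑ i, a i) * (∑ j, b j) =
      ∑ i, a i * b i +
        ∑ p ∈ univ.filter (fun p : ι × ι => p.1 < p.2), (a p.1 * b p.2 + a p.2 * b p.1) := by
  have trichotomy : ∀ i j, a i * b j =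
      (if i < j then a i * b j else 0) + (if j < i then a i * b j else 0) +
        if i = j then a i * b j else 0 := by
    intro i j
    rcases lt_trichotomy i j with h | rfl | h
    · simp [h, h.not_gt, h.ne]
    · simp
    · simp [h, h.not_gt, h.ne']
  calc (∑ i, a i) * (∑ j, b j)
      = ∑ i, ∑ j, ((if i < j then a i * b j else 0) + (if j < i then a i * b j else 0) +
          if i = j then a i * b j else 0) := by
        simp_rw [sum_mul_sum, ← trichotomy]
    _ = ∑ i, a i * b i + ∑ i, ∑ j, if i < j then a i * b j + a j * b i else 0 := by
        simp only [sum_add_distrib, sum_ite_eq, mem_univ, if_true]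
        rw [sum_comm (f := fun i j => if j < i then a i * b j else 0)]
        simp only [← sum_add_distrib, ← ite_add_zero]
        exact sum_congr rfl fun _ _ => add_comm _ _
    _ = _ := by rw [sum_filter, Fintype.sum_prod_type]

theorem sum_lt_mul_mul_sub_sq {ι R : Type*} [Fintype ι] [LinearOrder ι] [CommRing R]
    (w x : ι → R) :
    ∑ p ∈ univ.filter (fun p : ι × ι => p.1 < p.2), w p.1 * w p.2 * (x p.1 - x p.2) ^ 2 =
      (∑ i, w i) * ∑ i, w i * x i ^ 2 - (∑ i, w i * x i) ^ 2 := by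
  rw [sq (∑ i, w i * x i), sum_mul_sum_eq_sum_add_sum_lt, sum_mul_sum_eq_sum_add_sum_lt]
  have diag (i : ι) : w i * (w i * x i ^ 2) = w i * x i * (w i * x i) := by ring
  simp only [diag, add_sub_add_left_eq_sub, ← sum_sub_distrib]
  exact sum_congr rfl fun p _ => by ring

end Finset

theorem stmt_3_general (n k : ℕ) (hn : 2 ≤ n) (l : Fin k → ℂ)
    (r : Fin k → ℕ) (hsum : ∑ j, r j = n)
    (f : ℂ[X]) (hf : f = ∏ j, (X - C (l j)) ^ r j)
    (zn1 : ℂ) (hzn1 : (derivative^[n - 1] f).eval zn1 = 0)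
    (zn2 : ℂ) (hzn2 : (derivative^[n - 2] f).eval zn2 = 0) :
    (zn1 - zn2) ^ 2 =
      (1 / ((n : ℂ) ^ 2 * ((n : ℂ) - 1))) *
        ∑ p ∈ Finset.univ.filter (fun p : Fin k × Fin k => p.1 < p.2),
          (r p.1 : ℂ) * (r p.2 : ℂ) * (l p.1 - l p.2) ^ 2 := by
  obtain ⟨m, rfl⟩ : ∃ m, n = m + 2 := ⟨n - 2, by omega⟩
  set s := Finset.univ.val.bind fun j => Multiset.replicate (r j) (l j)
  have hfs : f = (s.map fun t => X - C t).prod := by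
    simp [hf, s, Multiset.map_bind, Multiset.prod_bind, Finset.prod_eq_multiset_prod]
  have hs : Multiset.card s = m + 2 := by
    simp only [s, Multiset.card_bind, Function.comp_def, Multiset.card_replicate,
      ← Finset.sum_eq_multiset_sum, hsum]
  have key := Multiset.sq_sub_of_eval_iterate_derivative_eq_zero hs (hfs ▸ hzn1) (hfs ▸ hzn2)
  have hsum₁ : s.sum = ∑ j, (r j : ℂ) * l j := by
    simp [s, Multiset.sum_bind, Finset.sum_eq_multiset_sum]
  have hsum₂ : (s.map (· ^ 2)).sum = ∑ j, (r j : ℂ) * l j ^ 2 := by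
    simp [s, Multiset.map_bind, Multiset.sum_bind, Finset.sum_eq_multiset_sum]
  have hw : ∑ j, (r j : ℂ) = (m : ℂ) + 2 := by exact_mod_cast hsum
  have hpred : ((m + 2 : ℕ) : ℂ) - 1 = (m : ℂ) + 1 := by push_cast; ring
  rw [Finset.sum_lt_mul_mul_sub_sq (fun j => (r j : ℂ)) l, hw, ← hsum₁, ← hsum₂, ← key, hpred]
  have hm : (m : ℂ) + 2 ≠ 0 := by exact_mod_cast (m + 1).succ_ne_zero
  push_cast
  field_simp

theorem stmt_3 (n k : ℕ) (hn : 2 ≤ n) (l : Fin k → ℂ) (hl : Function.Injective l)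
    (r : Fin k → ℕ) (hr : ∀ j, 1 ≤ r j) (hsum : ∑ j, r j = n)
    (f : ℂ[X]) (hf : f = ∏ j, (X - C (l j)) ^ r j)
    (zn1 : ℂ) (hzn1 : (derivative^[n - 1] f).eval zn1 = 0)
    (zn2 : ℂ) (hzn2 : (derivative^[n - 2] f).eval zn2 = 0) :
    (zn1 - zn2) ^ 2 =
      (1 / ((n : ℂ) ^ 2 * ((n : ℂ) - 1))) *
        ∑ p ∈ Finset.univ.filter (fun p : Fin k × Fin k => p.1 < p.2),
          (r p.1 : ℂ) * (r p.2 : ℂ) * (l p.1 - l p.2) ^ 2 :=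
  stmt_3_general n k hn l r hsum f hf zn1 hzn1 zn2 hzn2
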